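/- Let A_1, …, A_M be real n×n matrices with A := A_1 Hurwitz, D_j := A_j − A_1, and B_1, …, B_M real n×m matrices. Define P_1 as the unique symmetric positive semidefinite solution of A·P_1 + P_1·Aᵀ + ∑_{j=1}^{M} B_j·B_jᵀ = 0 and, for k ≥ 2, P_k as the unique symmetric positive semidefinite solution of A·P_k + P_k·Aᵀ + ∑_{j=1}^{M} D_j·P_{k−1}·D_jᵀ = 0. If the series ∑_{k≥1} P_k is summable with sum P, then the range of P equals the reachability subspace R, i.e. the span of all columns of matrices of the form M_s ⋯ M_1 · B_{i_0}, where s ≥ 0, each M_t ∈ {A_1, …, A_M}, i_0 ∈ {1,…,M}, and the empty product is the identity matrix. -/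

import Mathlib

/-!
Since `A₀ := A 0` is Hurwitz, `A₀` and `-A₀ᵀ` have no common eigenvalue, so by Sylvester's
argument the Lyapunov operator `X ↦ A₀ X + X A₀ᵀ` is injective; restricted to the matrices with
columns in an `A₀`-invariant subspace `V` it is then bijective, so a Lyapunov solution with
forcing term ranging in `V` ranges in `V` itself. As `R` is invariant under every `Aⱼ`, hence
under `A₀` and every `Dⱼ`, induction puts the range of every `P k`, and so of `S`, inside `R`.

Conversely, positive semidefiniteness gives `ker S = ⋂ₖ ker (P k)`. Testing the equation for
`P k` against `x ∈ ker (P k)` shows that its (semidefinite) forcing term vanishes at `x`, and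
then so does `P k A₀ᵀ x`. For `x ∈ ker S` this gives `Bᵢᵀ x = 0` and `P k (Dⱼᵀ x) = 0`, so
`ker S` lies in every `ker Bᵢᵀ` and is `Aⱼᵀ`-invariant; dually `range S = (ker S)ᗮ` contains
every `range Bᵢ` and is `Aⱼ`-invariant, so it contains `R`.
-/

open Matrix

/-- A real square matrix is Hurwitz if every eigenvalue of it, viewed as a complex
matrix, has strictly negative real part. -/
def IsHurwitz {n : ℕ} (A : Matrix (Fin n) (Fin n) ℝ) : Prop :=
  ∀ μ ∈ spectrum ℂ (A.map (algebraMap ℝ ℂ)), μ.re < 0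

open Polynomial

theorem LinearMap.mem_of_injective_of_apply_mem {K V : Type*} [DivisionRing K] [AddCommGroup V]
    [Module K V] [FiniteDimensional K V] {f : V →ₗ[K] V} (hf : Function.Injective f)
    {W : Submodule K V} (hW : ∀ w ∈ W, f w ∈ W) {x : V} (hx : f x ∈ W) : x ∈ W := by
  have hsurj : Function.Surjective (f.restrict hW) :=
    LinearMap.injective_iff_surjective.mp fun a b hab =>
      Subtype.ext (hf (congrArg Subtype.val hab))
  obtain ⟨w, hw⟩ := hsurj ⟨f x, hx⟩
  rw [← hf (congrArg Subtype.val hw)]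
  exact w.2

theorem HasSum.matrix_mulVec {β R m n : Type*} [Fintype n] [TopologicalSpace R]
    [NonUnitalNonAssocSemiring R] [IsTopologicalSemiring R] {P : β → Matrix m n R}
    {S : Matrix m n R} (hS : HasSum P S) (x : n → R) :
    HasSum (fun k => P k *ᵥ x) (S *ᵥ x) :=
  Pi.hasSum.mpr fun i => hasSum_sum fun j _ => (Pi.hasSum.mp (Pi.hasSum.mp hS i) j).mul_right _

theorem HasSum.dotProduct {β R n : Type*} [Fintype n] [TopologicalSpace R]
    [NonUnitalNonAssocSemiring R] [IsTopologicalSemiring R] {v : β → n → R} {w : n → R}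
    (hv : HasSum v w) (x : n → R) : HasSum (fun k => x ⬝ᵥ v k) (x ⬝ᵥ w) :=
  hasSum_sum fun i _ => (Pi.hasSum.mp hv i).mul_left _

namespace Matrix

section Sylvester

variable {m n K : Type*} [Fintype m] [DecidableEq m] [Fintype n] [DecidableEq n] [Field K]
  {A : Matrix m m K} {C : Matrix n n K} {X : Matrix m n K}

theorem pow_mul_eq_mul_pow_of_mul_eq_mul (h : A * X = X * C) (k : ℕ) :
    A ^ k * X = X * C ^ k := by
  induction k with
  | zero => simp
  | succ k ih => rw [pow_succ, Matrix.mul_assoc, h, ← Matrix.mul_assoc, ih, Matrix.mul_assoc,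
      ← pow_succ]

theorem aeval_mul_eq_mul_aeval_of_mul_eq_mul (h : A * X = X * C) (p : K[X]) :
    aeval A p * X = X * aeval C p := by
  simp only [aeval_eq_sum_range, Matrix.sum_mul, Matrix.mul_sum, Matrix.smul_mul,
    Matrix.mul_smul, pow_mul_eq_mul_pow_of_mul_eq_mul h]

theorem eq_zero_of_mul_eq_mul_of_isCoprime_charpoly (hAC : IsCoprime A.charpoly C.charpoly)
    (h : A * X = X * C) : X = 0 := by
  obtain ⟨a, b, hab⟩ := hAC
  have hunit : aeval C a * aeval C A.charpoly = 1 := by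
    simpa [aeval_self_charpoly] using congrArg (aeval C) hab
  calc X = X * (aeval C a * aeval C A.charpoly) := by rw [hunit, Matrix.mul_one]
    _ = X * aeval C A.charpoly * aeval C a := by
        rw [← map_mul, mul_comm, map_mul, Matrix.mul_assoc]
    _ = 0 := by rw [← aeval_mul_eq_mul_aeval_of_mul_eq_mul h, aeval_self_charpoly,
        Matrix.zero_mul, Matrix.zero_mul]

end Sylvester

theorem IsHermitian.of_hasSum {β n R : Type*} [AddCommMonoid R] [StarAddMonoid R]
    [TopologicalSpace R] [ContinuousStar R] [T2Space R] {P : β → Matrix n n R} {S : Matrix n n R}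
    (hS : HasSum P S) (hP : ∀ k, (P k).IsHermitian) : S.IsHermitian :=
  hS.matrix_conjTranspose.unique (by simpa only [(hP _).eq] using hS)

section Real

variable {m n ι : Type*} [Fintype m] [Fintype n] [Fintype ι]

theorem IsHermitian.mem_range_mulVecLin_iff [DecidableEq n] {S : Matrix n n ℝ}
    (hS : S.IsHermitian) {v : n → ℝ} :
    v ∈ LinearMap.range S.mulVecLin ↔ ∀ x, S *ᵥ x = 0 → x ⬝ᵥ v = 0 := by
  have hT : S.toEuclideanLin.IsSymmetric := isSymmetric_toEuclideanLin_iff.mpr hS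
  have hrange : LinearMap.range S.toEuclideanLin = (LinearMap.ker S.toEuclideanLin)ᗮ := by
    rw [← hT.orthogonal_range, Submodule.orthogonal_orthogonal]
  have hv : v ∈ LinearMap.range S.mulVecLin ↔
      WithLp.toLp 2 v ∈ LinearMap.range S.toEuclideanLin := by
    simp only [LinearMap.mem_range, mulVecLin_apply, toLpLin_apply]
    constructor
    · rintro ⟨y, rfl⟩
      exact ⟨WithLp.toLp 2 y, rfl⟩
    · rintro ⟨y, hy⟩
      exact ⟨y.ofLp, congrArg WithLp.ofLp hy⟩
  rw [hv, hrange, Submodule.mem_orthogonal]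
  constructor
  · intro h x hx
    simpa [EuclideanSpace.inner_eq_star_dotProduct, dotProduct_comm] using
      h (WithLp.toLp 2 x) (by simp [hx])
  · intro h u hu
    simpa [EuclideanSpace.inner_eq_star_dotProduct, dotProduct_comm] using
      h u.ofLp (by simpa [toLpLin_apply] using congrArg WithLp.ofLp hu)

theorem IsHermitian.range_mulVecLin_le_of_ker [DecidableEq n] {S : Matrix n n ℝ}
    (hS : S.IsHermitian) {Y : Matrix n m ℝ} (h : ∀ x, S *ᵥ x = 0 → Yᵀ *ᵥ x = 0) :
    LinearMap.range Y.mulVecLin ≤ LinearMap.range S.mulVecLin := by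
  rintro _ ⟨u, rfl⟩
  rw [hS.mem_range_mulVecLin_iff]
  intro x hx
  rw [mulVecLin_apply, dotProduct_mulVec, ← mulVec_transpose, h x hx, zero_dotProduct]

theorem IsHermitian.mulVec_mem_range_of_ker [DecidableEq n] {S A : Matrix n n ℝ}
    (hS : S.IsHermitian) (h : ∀ x, S *ᵥ x = 0 → S *ᵥ (Aᵀ *ᵥ x) = 0) {v : n → ℝ}
    (hv : v ∈ LinearMap.range S.mulVecLin) : A *ᵥ v ∈ LinearMap.range S.mulVecLin := by
  obtain ⟨u, rfl⟩ := hv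
  refine hS.range_mulVecLin_le_of_ker (Y := A * S) (fun x hx => ?_) ⟨u, ?_⟩
  · rw [transpose_mul, ← mulVec_mulVec, ← conjTranspose_eq_transpose_of_trivial, hS.eq, h x hx]
  · simp [mulVec_mulVec]

theorem mulVec_eq_zero_iff_of_hasSum {β : Type*} {P : β → Matrix n n ℝ} {S : Matrix n n ℝ}
    (hS : HasSum P S) (hP : ∀ k, (P k).PosSemidef) {x : n → ℝ} :
    S *ᵥ x = 0 ↔ ∀ k, P k *ᵥ x = 0 := by
  constructor
  · intro hx k
    have hq : HasSum (fun k => x ⬝ᵥ P k *ᵥ x) 0 := by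
      simpa [hx] using (HasSum.matrix_mulVec hS x).dotProduct x
    have hzero := (hasSum_zero_iff_of_nonneg fun k => by
      simpa using (hP k).dotProduct_mulVec_nonneg x).mp hq
    simpa using ((hP k).dotProduct_mulVec_zero_iff x).mp (by simpa using congrFun hzero k)
  · intro hx
    exact (HasSum.matrix_mulVec hS x).unique (by simp [hx])

theorem range_mulVecLin_le_of_hasSum {β : Type*} {P : β → Matrix m n ℝ} {S : Matrix m n ℝ}
    (hS : HasSum P S) {V : Submodule ℝ (m → ℝ)}
    (hP : ∀ k, LinearMap.range (P k).mulVecLin ≤ V) : LinearMap.range S.mulVecLin ≤ V := by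
  rintro _ ⟨x, rfl⟩
  exact V.closed_of_finiteDimensional.mem_of_tendsto (HasSum.matrix_mulVec hS x)
    (.of_forall fun s => V.sum_mem fun k _ => hP k ⟨x, rfl⟩)

theorem mulVec_transpose_mulVec_of_lyapunov {R : Type*} [CommRing R] {A P Q : Matrix n n R}
    (h : A * P + P * Aᵀ + Q = 0) {x : n → R} (hx : P *ᵥ x = 0) :
    P *ᵥ (Aᵀ *ᵥ x) = -(Q *ᵥ x) := by
  have := congrArg (· *ᵥ x) h
  simp only [add_mulVec, ← mulVec_mulVec, hx, mulVec_zero, zero_add, zero_mulVec] at this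
  exact eq_neg_of_add_eq_zero_left this

theorem dotProduct_mulVec_eq_zero_of_lyapunov {A P Q : Matrix n n ℝ}
    (h : A * P + P * Aᵀ + Q = 0) (hP : P.IsHermitian) {x : n → ℝ} (hx : P *ᵥ x = 0) :
    x ⬝ᵥ (Q *ᵥ x) = 0 := by
  rw [← neg_eq_zero, ← dotProduct_neg, ← mulVec_transpose_mulVec_of_lyapunov h hx,
    dotProduct_mulVec, ← mulVec_transpose, ← conjTranspose_eq_transpose_of_trivial, hP.eq, hx,
    zero_dotProduct]

theorem PosSemidef.mulVec_transpose_mulVec_eq_zero {H : Matrix m m ℝ} (hH : H.PosSemidef)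
    {F : ι → Matrix n m ℝ} {x : n → ℝ} (h : x ⬝ᵥ ((∑ j, F j * H * (F j)ᵀ) *ᵥ x) = 0) (j : ι) :
    H *ᵥ ((F j)ᵀ *ᵥ x) = 0 := by
  have hterm : ∀ i, x ⬝ᵥ ((F i * H * (F i)ᵀ) *ᵥ x) = (F i)ᵀ *ᵥ x ⬝ᵥ H *ᵥ ((F i)ᵀ *ᵥ x) :=
    fun i => by rw [← mulVec_mulVec, ← mulVec_mulVec, dotProduct_mulVec, mulVec_transpose]
  simp only [sum_mulVec, dotProduct_sum, hterm] at h
  have hnonneg : ∀ i, 0 ≤ (F i)ᵀ *ᵥ x ⬝ᵥ H *ᵥ ((F i)ᵀ *ᵥ x) := fun i => by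
    simpa using hH.dotProduct_mulVec_nonneg ((F i)ᵀ *ᵥ x)
  have := (Finset.sum_eq_zero_iff_of_nonneg fun i _ => hnonneg i).mp h j (Finset.mem_univ j)
  exact (hH.dotProduct_mulVec_zero_iff _).mp (by rwa [star_trivial])

theorem mulVec_eq_zero_of_lyapunov_sum {A P : Matrix n n ℝ} {H : Matrix m m ℝ}
    {F : ι → Matrix n m ℝ} (h : A * P + P * Aᵀ + ∑ j, F j * H * (F j)ᵀ = 0)
    (hP : P.IsHermitian) (hH : H.PosSemidef) {x : n → ℝ} (hx : P *ᵥ x = 0) :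
    (∀ j, H *ᵥ ((F j)ᵀ *ᵥ x) = 0) ∧ P *ᵥ (Aᵀ *ᵥ x) = 0 := by
  have hF := hH.mulVec_transpose_mulVec_eq_zero (dotProduct_mulVec_eq_zero_of_lyapunov h hP hx)
  refine ⟨hF, ?_⟩
  rw [mulVec_transpose_mulVec_of_lyapunov h hx, sum_mulVec]
  simp [← mulVec_mulVec, hF]

theorem transpose_mulVec_eq_zero_of_lyapunov_sum_mul_transpose {A P : Matrix n n ℝ}
    {B : ι → Matrix n m ℝ} (h : A * P + P * Aᵀ + ∑ j, B j * (B j)ᵀ = 0) (hP : P.IsHermitian)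
    {x : n → ℝ} (hx : P *ᵥ x = 0) (i : ι) : (B i)ᵀ *ᵥ x = 0 := by
  classical
  simpa using (mulVec_eq_zero_of_lyapunov_sum (H := 1) (by simpa using h) hP .one hx).1 i

end Real

end Matrix

theorem IsHurwitz.isCoprime_charpoly_neg_transpose {n : ℕ} {A : Matrix (Fin n) (Fin n) ℝ}
    (hA : IsHurwitz A) : IsCoprime A.charpoly (-Aᵀ).charpoly := by
  refine (isCoprime_iff_aeval_ne_zero_of_isAlgClosed ℝ ℂ _ _).mpr fun μ => ?_
  by_contra! hμ
  have hspec : ∀ {N : Matrix (Fin n) (Fin n) ℝ}, aeval μ N.charpoly = 0 →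
      μ ∈ spectrum ℂ (N.map (algebraMap ℝ ℂ)) := fun hN => by
    rwa [mem_spectrum_iff_isRoot_charpoly, charpoly_map, IsRoot, eval_map_algebraMap]
  have h₁ := hA μ (hspec hμ.1)
  have h₂ := hA (-μ) (by
    rw [← transpose_neg, charpoly_transpose] at hμ
    have h := hspec hμ.2
    rwa [← (algebraMap ℝ ℂ).mapMatrix_apply, map_neg, ← spectrum.neg_eq, Set.mem_neg] at h)
  rw [Complex.neg_re] at h₂
  linarith

theorem IsHurwitz.eq_zero_of_lyapunov {n : ℕ} {A X : Matrix (Fin n) (Fin n) ℝ}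
    (hA : IsHurwitz A) (h : A * X + X * Aᵀ = 0) : X = 0 :=
  eq_zero_of_mul_eq_mul_of_isCoprime_charpoly hA.isCoprime_charpoly_neg_transpose
    (by rw [Matrix.mul_neg, eq_neg_of_add_eq_zero_left h])

theorem IsHurwitz.range_mulVecLin_le_of_lyapunov {n : ℕ} {A P Q : Matrix (Fin n) (Fin n) ℝ}
    (hA : IsHurwitz A) (h : A * P + P * Aᵀ + Q = 0) {V : Submodule ℝ (Fin n → ℝ)}
    (hAV : ∀ v ∈ V, A *ᵥ v ∈ V) (hQV : LinearMap.range Q.mulVecLin ≤ V) :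
    LinearMap.range P.mulVecLin ≤ V := by
  let W : Submodule ℝ (Matrix (Fin n) (Fin n) ℝ) :=
    { carrier := {Y | ∀ x, Y *ᵥ x ∈ V}
      add_mem' := fun hY hZ x => by rw [add_mulVec]; exact V.add_mem (hY x) (hZ x)
      zero_mem' := fun x => by rw [zero_mulVec]; exact V.zero_mem
      smul_mem' := fun c Y hY x => by rw [smul_mulVec]; exact V.smul_mem c (hY x) }
  let L := LinearMap.mulLeft ℝ A + LinearMap.mulRight ℝ Aᵀ
  have hL : Function.Injective L := by
    rw [← LinearMap.ker_eq_bot, LinearMap.ker_eq_bot']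
    exact fun Y hY => hA.eq_zero_of_lyapunov hY
  have hLW : ∀ Y ∈ W, L Y ∈ W := fun Y hY x => by
    change (A * Y + Y * Aᵀ) *ᵥ x ∈ V
    rw [add_mulVec, ← mulVec_mulVec, ← mulVec_mulVec]
    exact V.add_mem (hAV _ (hY x)) (hY _)
  have hPW : P ∈ W := LinearMap.mem_of_injective_of_apply_mem hL hLW fun x => by
    change (A * P + P * Aᵀ) *ᵥ x ∈ V
    rw [eq_neg_of_add_eq_zero_left h, neg_mulVec]
    exact V.neg_mem (hQV ⟨x, rfl⟩)
  rintro _ ⟨x, rfl⟩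
  exact hPW x

section Reachability

variable {ι κ n m R : Type*} [Fintype n] [DecidableEq n] [Fintype m] [CommSemiring R]
  (A : ι → Matrix n n R) (B : κ → Matrix n m R)

def reachableSubspace : Submodule R (n → R) :=
  ⨆ (L : List (Matrix n n R)) (_ : ∀ X ∈ L, X ∈ Set.range A) (i : κ),
    LinearMap.range (L.prod * B i).mulVecLin

theorem range_mulVecLin_le_reachableSubspace (i : κ) :
    LinearMap.range (B i).mulVecLin ≤ reachableSubspace A B := by
  have h : LinearMap.range (([] : List (Matrix n n R)).prod * B i).mulVecLin ≤
      reachableSubspace A B :=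
    le_iSup_of_le [] <| le_iSup_of_le (by simp) <| le_iSup_of_le i le_rfl
  simpa using h

theorem mulVec_mem_reachableSubspace (j : ι) {v : n → R} (hv : v ∈ reachableSubspace A B) :
    A j *ᵥ v ∈ reachableSubspace A B := by
  suffices reachableSubspace A B ≤ (reachableSubspace A B).comap (A j).mulVecLin from this hv
  refine iSup₂_le fun L hL => iSup_le fun i => ?_
  rintro _ ⟨u, rfl⟩
  have hjL : ∀ X ∈ A j :: L, X ∈ Set.range A := by
    simpa [List.forall_mem_cons] using hL
  have h : LinearMap.range ((A j :: L).prod * B i).mulVecLin ≤ reachableSubspace A B :=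
    le_iSup_of_le (A j :: L) <| le_iSup_of_le hjL <| le_iSup_of_le i le_rfl
  exact h ⟨u, by simp [Matrix.mul_assoc, mulVec_mulVec]⟩

theorem reachableSubspace_le {V : Submodule R (n → R)}
    (hB : ∀ i, LinearMap.range (B i).mulVecLin ≤ V) (hA : ∀ j, ∀ v ∈ V, A j *ᵥ v ∈ V) :
    reachableSubspace A B ≤ V := by
  refine iSup₂_le fun L hL => iSup_le fun i => ?_
  induction L with
  | nil => simpa using hB i
  | cons X L ih =>
    obtain ⟨j, rfl⟩ := hL X List.mem_cons_self
    rintro _ ⟨u, rfl⟩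
    rw [mulVecLin_apply, List.prod_cons, Matrix.mul_assoc, ← mulVec_mulVec]
    exact hA j _ (ih (fun Y hY => hL Y (List.mem_cons_of_mem _ hY)) ⟨u, rfl⟩)

end Reachability

section LyapunovChain

variable {n m : ℕ} {ι : Type*} [Fintype ι] {A₀ : Matrix (Fin n) (Fin n) ℝ}
  {B : ι → Matrix (Fin n) (Fin m) ℝ} {D : ι → Matrix (Fin n) (Fin n) ℝ}
  {P : ℕ → Matrix (Fin n) (Fin n) ℝ}

theorem IsHurwitz.range_mulVecLin_le_of_lyapunov_chain (hA₀ : IsHurwitz A₀)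
    (hP₀ : A₀ * P 0 + P 0 * A₀ᵀ + ∑ j, B j * (B j)ᵀ = 0)
    (hP : ∀ k, A₀ * P (k + 1) + P (k + 1) * A₀ᵀ + ∑ j, D j * P k * (D j)ᵀ = 0)
    {V : Submodule ℝ (Fin n → ℝ)} (hA₀V : ∀ v ∈ V, A₀ *ᵥ v ∈ V)
    (hDV : ∀ j, ∀ v ∈ V, D j *ᵥ v ∈ V) (hBV : ∀ j, LinearMap.range (B j).mulVecLin ≤ V)
    (k : ℕ) : LinearMap.range (P k).mulVecLin ≤ V := by
  induction k with
  | zero =>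
    refine hA₀.range_mulVecLin_le_of_lyapunov hP₀ hA₀V ?_
    rintro _ ⟨x, rfl⟩
    simp only [mulVecLin_apply, sum_mulVec, ← mulVec_mulVec]
    exact V.sum_mem fun j _ => hBV j ⟨_, rfl⟩
  | succ k ih =>
    refine hA₀.range_mulVecLin_le_of_lyapunov (hP k) hA₀V ?_
    rintro _ ⟨x, rfl⟩
    simp only [mulVecLin_apply, sum_mulVec, ← mulVec_mulVec]
    exact V.sum_mem fun j _ => hDV j _ (ih ⟨_, rfl⟩)

theorem mulVec_add_transpose_mulVec_eq_zero_of_lyapunov_chain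
    (hpsd : ∀ k, (P k).PosSemidef)
    (hP₀ : A₀ * P 0 + P 0 * A₀ᵀ + ∑ j, B j * (B j)ᵀ = 0)
    (hP : ∀ k, A₀ * P (k + 1) + P (k + 1) * A₀ᵀ + ∑ j, D j * P k * (D j)ᵀ = 0)
    {x : Fin n → ℝ} (hx : ∀ k, P k *ᵥ x = 0) (j : ι) (k : ℕ) :
    P k *ᵥ ((A₀ + D j)ᵀ *ᵥ x) = 0 := by
  have hA₀ : P k *ᵥ (A₀ᵀ *ᵥ x) = 0 := by
    cases k with
    | zero =>
      exact (mulVec_eq_zero_of_lyapunov_sum (H := 1) (by simpa using hP₀)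
        (hpsd 0).isHermitian .one (hx 0)).2
    | succ k =>
      exact (mulVec_eq_zero_of_lyapunov_sum (hP k) (hpsd _).isHermitian (hpsd k) (hx _)).2
  have hD := (mulVec_eq_zero_of_lyapunov_sum (hP k) (hpsd _).isHermitian (hpsd k) (hx _)).1 j
  rw [transpose_add, add_mulVec, mulVec_add, hA₀, hD, add_zero]

end LyapunovChain

theorem range_gramian_eq_reachability_subspace
    {n m M : ℕ} (hM : 0 < M)
    (A : Fin M → Matrix (Fin n) (Fin n) ℝ)
    (B : Fin M → Matrix (Fin n) (Fin m) ℝ)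
    (hA : IsHurwitz (A ⟨0, hM⟩))
    (D : Fin M → Matrix (Fin n) (Fin n) ℝ)
    (hD : ∀ j, D j = A j - A ⟨0, hM⟩)
    (P : ℕ → Matrix (Fin n) (Fin n) ℝ)
    -- `P 0` plays the role of `P₁`, etc.
    (hP1psd : (P 0).PosSemidef)
    (hP1 : A ⟨0, hM⟩ * P 0 + P 0 * (A ⟨0, hM⟩)ᵀ + ∑ j : Fin M, B j * (B j)ᵀ = 0)
    (hPkpsd : ∀ k : ℕ, (P (k + 1)).PosSemidef)
    (hPk : ∀ k : ℕ,
      A ⟨0, hM⟩ * P (k + 1) + P (k + 1) * (A ⟨0, hM⟩)ᵀ +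
        ∑ j : Fin M, D j * P k * (D j)ᵀ = 0)
    (S : Matrix (Fin n) (Fin n) ℝ) (hS : HasSum P S)
    -- the reachability subspace
    (R : Submodule ℝ (Fin n → ℝ))
    (hR : R = ⨆ (L : List (Matrix (Fin n) (Fin n) ℝ))
        (_ : ∀ X ∈ L, X ∈ Set.range A) (i : Fin M),
        LinearMap.range ((L.prod * B i).mulVecLin)) :
    LinearMap.range S.mulVecLin = R := by
  have hpsd : ∀ k, (P k).PosSemidef
    | 0 => hP1psd
    | k + 1 => hPkpsd k
  have hSherm : S.IsHermitian := .of_hasSum hS fun k => (hpsd k).isHermitian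
  have hA_eq : ∀ j, A j = A ⟨0, hM⟩ + D j := fun j => by rw [hD j, add_sub_cancel]
  replace hR : R = reachableSubspace A B := hR
  subst hR
  apply le_antisymm
  · refine range_mulVecLin_le_of_hasSum hS <| hA.range_mulVecLin_le_of_lyapunov_chain hP1 hPk
      (fun v => mulVec_mem_reachableSubspace A B _) (fun j v hv => ?_)
      (range_mulVecLin_le_reachableSubspace A B)
    rw [hD j, sub_mulVec]
    exact sub_mem (mulVec_mem_reachableSubspace A B j hv) (mulVec_mem_reachableSubspace A B _ hv)
  · refine reachableSubspace_le A B (fun i => hSherm.range_mulVecLin_le_of_ker fun x hx => ?_)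
      (fun j v hv => hSherm.mulVec_mem_range_of_ker (fun x hx => ?_) hv)
    · rw [mulVec_eq_zero_iff_of_hasSum hS hpsd] at hx
      exact transpose_mulVec_eq_zero_of_lyapunov_sum_mul_transpose hP1 (hpsd 0).isHermitian
        (hx 0) i
    · rw [mulVec_eq_zero_iff_of_hasSum hS hpsd] at hx ⊢
      rw [hA_eq j]
      exact mulVec_add_transpose_mulVec_eq_zero_of_lyapunov_chain hpsd hP1 hPk hx j
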